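/- Let T > 0, I = (0,T) with one-dimensional Lebesgue measure, (Ω, μ) a finite measure space, and U := L²(I × Ω) with respect to the product measure. Let W be a real Hilbert space and ι : W → L²(Ω, μ) a compact bounded linear operator. Fix α, β, γ > 0 and p ∈ (0,1). Assume f : U → ℝ is sequentially weakly lower semicontinuous and bounded below by a continuous affine functional (i.e., there exist a continuous linear functional g on U and c ∈ ℝ with f(u) ≥ g(u) + c for all u ∈ U). Then the problem of minimizing Φ(u,w) := f(u) + (α/2)‖u‖²_U + (β/2)‖w‖²_W + γ ∫_Ω |(ι w)(x)|^p dμ(x) over the admissible set K := {(u, w) ∈ U × W : |u(t,x)| ≤ (ι w)(x) for a.e. (t,x) ∈ I × Ω} admits a global solution, i.e., there exists (ū, w̄) ∈ K with Φ(ū, w̄) ≤ Φ(u, w) for all (u, w) ∈ K. -/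

import Mathlib

open MeasureTheory Filter

/-- The product measure on the time-space cylinder `I × Ω` with `I = (0,T)` carrying
one-dimensional Lebesgue measure. -/
noncomputable def timeSpaceMeasure {Ω : Type*} [MeasurableSpace Ω] (μ : Measure Ω)
    (T : ℝ) : Measure (ℝ × Ω) :=
  (volume.restrict (Set.Ioo (0 : ℝ) T)).prod μ

/-!
The direct method. The affine minorant of `f` makes `Φ` coercive, so a minimizing sequence is
bounded; a subsequence converges weakly in `U × W`, and by compactness of `ι` the images
`ι wₖ` converge strongly in `L²(Ω)`. The admissible set is closed under this convergence
because `|u| ≤ v` is tested by integrals over sets, which pass to weak limits. Along the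
subsequence `∫ |ι wₖ|^p` converges (for `p ≤ 1`, `|a|^p - |b|^p ≤ |a - b|^p`, and `∫ |h|^p` is
controlled by `‖h‖₂^p` via Hölder), the squared norms are weakly lower semicontinuous, and `f`
is so by assumption, hence `Φ` of the limit is at most the infimum.
-/

open Topology
open scoped ENNReal RealInnerProductSpace

theorem abs_norm_rpow_sub_norm_rpow_le {E : Type*} [SeminormedAddCommGroup E] {p : ℝ}
    (hp0 : 0 ≤ p) (hp1 : p ≤ 1) (u v : E) : |‖u‖ ^ p - ‖v‖ ^ p| ≤ ‖u - v‖ ^ p := by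
  have key (u v : E) : ‖u‖ ^ p - ‖v‖ ^ p ≤ ‖u - v‖ ^ p := by
    have := (Real.rpow_le_rpow (norm_nonneg u) (norm_le_norm_sub_add u v) hp0).trans
      (Real.rpow_add_le_add_rpow (norm_nonneg (u - v)) (norm_nonneg v) hp0 hp1)
    linarith
  exact abs_sub_le_iff.2 ⟨key u v, norm_sub_rev u v ▸ key v u⟩

namespace MeasureTheory.Lp

section IntegralRpow

variable {α E : Type*} [MeasurableSpace α] {μ : Measure α} [IsFiniteMeasure μ]
  [NormedAddCommGroup E] {p : ℝ}

theorem memLp_ofReal_of_le_two (hp2 : p ≤ 2) (a : Lp E 2 μ) : MemLp a (ENNReal.ofReal p) μ :=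
  (Lp.memLp a).mono_exponent (by simpa using ENNReal.ofReal_le_ofReal hp2)

theorem integrable_norm_rpow (hp0 : 0 < p) (hp2 : p ≤ 2) (a : Lp E 2 μ) :
    Integrable (fun x => ‖a x‖ ^ p) μ := by
  simpa [hp0.le] using (memLp_ofReal_of_le_two hp2 a).integrable_norm_rpow
    (by simpa using hp0) ENNReal.ofReal_ne_top

theorem integral_norm_rpow_le (hp0 : 0 < p) (hp2 : p ≤ 2) (a : Lp E 2 μ) :
    ∫ x, ‖a x‖ ^ p ∂μ ≤ ((μ Set.univ ^ (p⁻¹ - 2⁻¹)).toReal * ‖a‖) ^ p := by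
  have hle := eLpNorm_le_eLpNorm_mul_rpow_measure_univ
    (show ENNReal.ofReal p ≤ 2 by simpa using ENNReal.ofReal_le_ofReal hp2)
    (Lp.aestronglyMeasurable a)
  rw [(memLp_ofReal_of_le_two hp2 a).eLpNorm_eq_integral_rpow_norm (by simpa using hp0)
    ENNReal.ofReal_ne_top] at hle
  simp only [ENNReal.toReal_ofReal hp0.le, ENNReal.toReal_ofNat, one_div] at hle
  have hexp : 0 ≤ p⁻¹ - 2⁻¹ := sub_nonneg.2 (inv_anti₀ hp0 hp2)
  have hle' := ENNReal.toReal_mono (ENNReal.mul_ne_top (Lp.eLpNorm_ne_top a)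
    (ENNReal.rpow_ne_top_of_nonneg hexp (measure_ne_top μ _))) hle
  rw [ENNReal.toReal_ofReal (by positivity), ENNReal.toReal_mul, ← Lp.norm_def, mul_comm] at hle'
  calc ∫ x, ‖a x‖ ^ p ∂μ = ((∫ x, ‖a x‖ ^ p ∂μ) ^ p⁻¹) ^ p :=
        (Real.rpow_inv_rpow (integral_nonneg fun x => by positivity) hp0.ne').symm
    _ ≤ _ := by gcongr

theorem continuous_integral_norm_rpow (hp0 : 0 < p) (hp1 : p ≤ 1) :
    Continuous fun a : Lp E 2 μ => ∫ x, ‖a x‖ ^ p ∂μ := by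
  have hp2 : p ≤ 2 := by linarith
  set C := (μ Set.univ ^ (p⁻¹ - 2⁻¹)).toReal
  have hdist (a b : Lp E 2 μ) :
      dist (∫ x, ‖b x‖ ^ p ∂μ) (∫ x, ‖a x‖ ^ p ∂μ) ≤ (C * ‖b - a‖) ^ p := by
    rw [Real.dist_eq, ← integral_sub (integrable_norm_rpow hp0 hp2 b)
      (integrable_norm_rpow hp0 hp2 a)]
    refine abs_integral_le_integral_abs.trans ((integral_mono_ae ?_
      (integrable_norm_rpow hp0 hp2 (b - a)) ?_).trans (integral_norm_rpow_le hp0 hp2 _))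
    · exact ((integrable_norm_rpow hp0 hp2 b).sub (integrable_norm_rpow hp0 hp2 a)).abs
    · filter_upwards [Lp.coeFn_sub b a] with x hx
      rw [hx]
      exact abs_norm_rpow_sub_norm_rpow_le hp0.le hp1 _ _
  refine continuous_iff_continuousAt.2 fun a => tendsto_iff_dist_tendsto_zero.2 ?_
  refine squeeze_zero (fun _ => dist_nonneg) (fun b => hdist a b) ?_
  have : Continuous fun b : Lp E 2 μ => (C * ‖b - a‖) ^ p := by fun_prop (disch := positivity)
  simpa [Real.zero_rpow hp0.ne'] using this.tendsto a

end IntegralRpow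

section CompSnd

variable {α Ω E : Type*} [MeasurableSpace α] [MeasurableSpace Ω] [NormedAddCommGroup E]
  {p : ℝ≥0∞} (ρ : Measure α) [IsFiniteMeasure ρ] {μ : Measure Ω} [SFinite μ]

noncomputable def compSnd (a : Lp E p μ) : Lp E p (ρ.prod μ) :=
  ((Lp.memLp a).comp_snd ρ).toLp _

theorem coeFn_compSnd (a : Lp E p μ) : compSnd ρ a =ᵐ[ρ.prod μ] fun q => a q.2 :=
  MemLp.coeFn_toLp _

theorem lipschitzWith_compSnd [Fact (1 ≤ p)] :
    LipschitzWith (ρ Set.univ ^ (1 / p).toReal).toNNReal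
      (compSnd (E := E) (p := p) ρ (μ := μ)) := by
  intro a b
  have hmap : (ρ.prod μ).map Prod.snd = ρ Set.univ • μ := Measure.map_snd_prod
  have hsub : AEStronglyMeasurable (⇑a - ⇑b) ((ρ.prod μ).map Prod.snd) := by
    rw [hmap]
    exact ((Lp.aestronglyMeasurable a).sub (Lp.aestronglyMeasurable b)).smul_measure _
  rw [compSnd, compSnd, edist_toLp_toLp, edist_def, ENNReal.coe_toNNReal
    (ENNReal.rpow_ne_top_of_nonneg ENNReal.toReal_nonneg (measure_ne_top ρ _))]
  calc eLpNorm (fun q : α × Ω => a q.2 - b q.2) p (ρ.prod μ)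
      = eLpNorm (⇑a - ⇑b) p ((ρ.prod μ).map Prod.snd) :=
        (eLpNorm_map_measure hsub measurable_snd.aemeasurable).symm
    _ ≤ _ := hmap ▸ eLpNorm_smul_measure_le _ _ _ _

end CompSnd

end MeasureTheory.Lp

theorem ae_le_of_weak_tendsto {X : Type*} [MeasurableSpace X] {ν : Measure X}
    [IsFiniteMeasure ν] {u v : ℕ → Lp ℝ 2 ν} {u₀ v₀ : Lp ℝ 2 ν}
    (hu : ∀ z, Tendsto (fun k => ⟪u k, z⟫) atTop (𝓝 ⟪u₀, z⟫))
    (hv : ∀ z, Tendsto (fun k => ⟪v k, z⟫) atTop (𝓝 ⟪v₀, z⟫)) (huv : ∀ k, u k ≤ᵐ[ν] v k) :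
    u₀ ≤ᵐ[ν] v₀ := by
  refine ae_le_of_forall_setIntegral_le ((Lp.memLp u₀).integrable one_le_two)
    ((Lp.memLp v₀).integrable one_le_two) fun s hs hνs => ?_
  have hint (w : Lp ℝ 2 ν) : ⟪w, indicatorConstLp 2 hs hνs.ne (1 : ℝ)⟫ = ∫ x in s, w x ∂ν := by
    rw [real_inner_comm, L2.inner_indicatorConstLp_one]
  have hu' := hu (indicatorConstLp 2 hs hνs.ne 1)
  have hv' := hv (indicatorConstLp 2 hs hνs.ne 1)
  simp only [hint] at hu' hv'
  exact le_of_tendsto_of_tendsto' hu' hv' fun k =>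
    setIntegral_mono_ae ((Lp.memLp (u k)).integrable one_le_two).integrableOn
      ((Lp.memLp (v k)).integrable one_le_two).integrableOn (huv k)

theorem ae_abs_le_comp_snd_of_weak_tendsto {α Ω : Type*} [MeasurableSpace α]
    [MeasurableSpace Ω] (ρ : Measure α) [IsFiniteMeasure ρ] {μ : Measure Ω} [IsFiniteMeasure μ]
    {u : ℕ → Lp ℝ 2 (ρ.prod μ)} {u₀ : Lp ℝ 2 (ρ.prod μ)}
    (hu : ∀ z, Tendsto (fun k => ⟪u k, z⟫) atTop (𝓝 ⟪u₀, z⟫))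
    {a : ℕ → Lp ℝ 2 μ} {a₀ : Lp ℝ 2 μ} (ha : Tendsto a atTop (𝓝 a₀))
    (h : ∀ k, ∀ᵐ q ∂(ρ.prod μ), |u k q| ≤ a k q.2) : ∀ᵐ q ∂(ρ.prod μ), |u₀ q| ≤ a₀ q.2 := by
  have hv (z : Lp ℝ 2 (ρ.prod μ)) : Tendsto (fun k => ⟪Lp.compSnd ρ (a k), z⟫) atTop
      (𝓝 ⟪Lp.compSnd ρ a₀, z⟫) :=
    (((Lp.lipschitzWith_compSnd ρ).continuous.tendsto a₀).comp ha).inner tendsto_const_nhds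
  have hneg (z : Lp ℝ 2 (ρ.prod μ)) : Tendsto (fun k => ⟪-u k, z⟫) atTop (𝓝 ⟪-u₀, z⟫) := by
    simpa only [inner_neg_left] using (hu z).neg
  have hupper := ae_le_of_weak_tendsto hu hv fun k => by
    filter_upwards [h k, Lp.coeFn_compSnd ρ (a k)] with q hq hq'
    exact hq' ▸ (le_abs_self _).trans hq
  have hlower := ae_le_of_weak_tendsto hneg hv fun k => by
    filter_upwards [h k, Lp.coeFn_compSnd ρ (a k), Lp.coeFn_neg (u k)] with q hq hq' hq''
    rw [hq', hq'']
    exact (neg_le_abs _).trans hq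
  filter_upwards [hupper, hlower, Lp.coeFn_compSnd ρ a₀, Lp.coeFn_neg u₀] with q h₁ h₂ h₃ h₄
  rw [h₃] at h₁ h₂
  rw [h₄, Pi.neg_apply] at h₂
  exact abs_le.2 ⟨by linarith, h₁⟩

/-- Sequential Banach–Alaoglu on the separable closed span of the sequence. -/
theorem exists_strictMono_weak_tendsto {H : Type*} [NormedAddCommGroup H]
    [InnerProductSpace ℝ H] [CompleteSpace H] {x : ℕ → H} {R : ℝ} (hx : ∀ k, ‖x k‖ ≤ R) :
    ∃ (φ : ℕ → ℕ) (x₀ : H), StrictMono φ ∧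
      ∀ z, Tendsto (fun k => ⟪x (φ k), z⟫) atTop (𝓝 ⟪x₀, z⟫) := by
  set S := (Submodule.span ℝ (Set.range x)).topologicalClosure
  have hxS (k : ℕ) : x k ∈ S :=
    Submodule.le_topologicalClosure _ (Submodule.subset_span (Set.mem_range_self k))
  have : CompleteSpace S := (Submodule.isClosed_topologicalClosure _).completeSpace_coe
  have : TopologicalSpace.SeparableSpace S :=
    (Set.countable_range x).isSeparable.span.closure.separableSpace
  let ℓ (k : ℕ) : WeakDual ℝ S :=
    StrongDual.toWeakDual (InnerProductSpace.toDual ℝ S ⟨x k, hxS k⟩)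
  have hℓ (k : ℕ) : ℓ k ∈ WeakDual.toStrongDual ⁻¹' Metric.closedBall 0 R :=
    (dist_zero_right (InnerProductSpace.toDual ℝ S ⟨x k, hxS k⟩)).trans_le (by simpa using hx k)
  obtain ⟨ℓ₀, -, φ, hφ, hlim⟩ := WeakDual.isSeqCompact_closedBall ℝ S 0 R hℓ
  refine ⟨φ, (InnerProductSpace.toDual ℝ S).symm (WeakDual.toStrongDual ℓ₀), hφ, fun z => ?_⟩
  have := ((WeakDual.eval_continuous (S.orthogonalProjectionOnto z)).tendsto ℓ₀).comp hlim
  rw [← S.inner_orthogonalProjectionOnto_eq_of_mem_left, InnerProductSpace.toDual_symm_apply]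
  simpa [ℓ, Function.comp_def] using this

theorem IsCompactOperator.exists_strictMono_tendsto_of_weak {E F : Type*}
    [NormedAddCommGroup E] [InnerProductSpace ℝ E] [CompleteSpace E]
    [NormedAddCommGroup F] [InnerProductSpace ℝ F] [CompleteSpace F]
    {A : E →L[ℝ] F} (hA : IsCompactOperator A) {x : ℕ → E} {x₀ : E} {R : ℝ}
    (hx : ∀ k, ‖x k‖ ≤ R) (hweak : ∀ z, Tendsto (fun k => ⟪x k, z⟫) atTop (𝓝 ⟪x₀, z⟫)) :
    ∃ φ : ℕ → ℕ, StrictMono φ ∧ Tendsto (fun k => A (x (φ k))) atTop (𝓝 (A x₀)) := by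
  have hmem (k : ℕ) : A (x k) ∈ closure (A '' Metric.closedBall 0 R) :=
    subset_closure ⟨x k, mem_closedBall_zero_iff.2 (hx k), rfl⟩
  obtain ⟨y, -, φ, hφ, hy⟩ := (hA.isCompact_closure_image_closedBall R).tendsto_subseq hmem
  suffices y = A x₀ from ⟨φ, hφ, this ▸ hy⟩
  refine ext_inner_right ℝ fun z => tendsto_nhds_unique (hy.inner tendsto_const_nhds) ?_
  simpa only [ContinuousLinearMap.adjoint_inner_right, Function.comp_def] using
    (hweak (ContinuousLinearMap.adjoint A z)).comp hφ.tendsto_atTop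

theorem EReal.le_of_le_liminf_of_tendsto {ι : Type*} {l : Filter ι} [l.NeBot] {a r : ℝ}
    {b c : ι → ℝ} (ha : (a : EReal) ≤ liminf (fun k => (b k : EReal)) l) (hbc : ∀ k, b k ≤ c k)
    (hc : Tendsto c l (𝓝 r)) : a ≤ r := by
  have hlim : liminf (fun k => (c k : EReal)) l = r :=
    ((continuous_coe_real_ereal.tendsto r).comp hc).liminf_eq
  exact EReal.coe_le_coe_iff.1 <| ha.trans <| hlim ▸
    liminf_le_liminf (Eventually.of_forall fun k => EReal.coe_le_coe_iff.2 (hbc k))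

theorem exists_isMinOn_of_tendsto {X : Type*} {Φ : X → ℝ} {K : Set X} (hK : K.Nonempty)
    (hbdd : BddBelow (Φ '' K))
    (hlim : ∀ (x : ℕ → X) (m : ℝ), (∀ k, x k ∈ K) → Tendsto (fun k => Φ (x k)) atTop (𝓝 m) →
      ∃ y ∈ K, Φ y ≤ m) :
    ∃ y ∈ K, IsMinOn Φ K y := by
  obtain ⟨v, -, hv, hvK⟩ := exists_seq_tendsto_sInf (hK.image Φ) hbdd
  choose x hxK hx using hvK
  obtain ⟨y, hyK, hy⟩ := hlim x _ hxK (by simpa only [hx] using hv)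
  exact ⟨y, hyK, fun z hz => hy.trans (csInf_le hbdd ⟨z, hz, rfl⟩)⟩

section SparseProblem

variable {E W Ω : Type*} [NormedAddCommGroup E] [NormedAddCommGroup W] [MeasurableSpace Ω]
  {μ : Measure Ω}

noncomputable def sparseObjective (f : E → ℝ) (α β γ p : ℝ) (ι : W → Lp ℝ 2 μ) (x : E × W) :
    ℝ :=
  f x.1 + α / 2 * ‖x.1‖ ^ 2 + β / 2 * ‖x.2‖ ^ 2 + γ * ∫ t, |ι x.2 t| ^ p ∂μ

def sparseAdmissible {X : Type*} [MeasurableSpace X] (ρ : Measure X) (ι : W → Lp ℝ 2 μ) :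
    Set (Lp ℝ 2 (ρ.prod μ) × W) :=
  {x | ∀ᵐ q ∂(ρ.prod μ), |x.1 q| ≤ ι x.2 q.2}

section Objective

variable {f : E → ℝ} {α β γ p : ℝ} {ι : W → Lp ℝ 2 μ}

theorem le_sparseObjective [NormedSpace ℝ E] {g : StrongDual ℝ E} {c : ℝ}
    (hfg : ∀ u, g u + c ≤ f u) (hα : 0 < α) (hγ : 0 ≤ γ) (x : E × W) :
    c - ‖g‖ ^ 2 / α + α / 4 * ‖x.1‖ ^ 2 + β / 2 * ‖x.2‖ ^ 2 ≤ sparseObjective f α β γ p ι x := by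
  have hJ : 0 ≤ γ * ∫ t, |ι x.2 t| ^ p ∂μ :=
    mul_nonneg hγ (integral_nonneg fun t => by positivity)
  have hg : -(‖g‖ * ‖x.1‖) ≤ g x.1 := neg_le_of_abs_le (g.le_opNorm x.1)
  have hamgm : ‖g‖ * ‖x.1‖ ≤ α / 4 * ‖x.1‖ ^ 2 + ‖g‖ ^ 2 / α := by
    have hsq : 0 ≤ (α * ‖x.1‖ - 2 * ‖g‖) ^ 2 / (4 * α) := by positivity
    have hexp : (α * ‖x.1‖ - 2 * ‖g‖) ^ 2 / (4 * α) =
        α / 4 * ‖x.1‖ ^ 2 + ‖g‖ ^ 2 / α - ‖g‖ * ‖x.1‖ := by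
      field_simp
      ring
    linarith
  unfold sparseObjective
  linarith [hfg x.1]

theorem exists_norm_le_of_sparseObjective_le [NormedSpace ℝ E] {g : StrongDual ℝ E} {c : ℝ}
    (hfg : ∀ u, g u + c ≤ f u) (hα : 0 < α) (hβ : 0 < β) (hγ : 0 ≤ γ) (M : ℝ) :
    ∃ R, ∀ x : E × W, sparseObjective f α β γ p ι x ≤ M → ‖x.1‖ ≤ R ∧ ‖x.2‖ ≤ R := by
  set D := M - c + ‖g‖ ^ 2 / α
  refine ⟨1 + 4 * D / α + 2 * D / β, fun x hx => ?_⟩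
  have hlow := le_sparseObjective (p := p) (ι := ι) (β := β) hfg hα hγ x
  have hu : ‖x.1‖ ^ 2 ≤ 4 * D / α := by
    rw [le_div_iff₀ hα]
    nlinarith [sq_nonneg ‖x.2‖]
  have hw : ‖x.2‖ ^ 2 ≤ 2 * D / β := by
    rw [le_div_iff₀ hβ]
    nlinarith [sq_nonneg ‖x.1‖]
  have h4 : 0 ≤ 4 * D / α := (sq_nonneg _).trans hu
  have h2 : 0 ≤ 2 * D / β := (sq_nonneg _).trans hw
  constructor <;> nlinarith [sq_nonneg (‖x.1‖ - 1), sq_nonneg (‖x.2‖ - 1)]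

theorem sparseObjective_le_of_tendsto [InnerProductSpace ℝ E] [InnerProductSpace ℝ W]
    [IsFiniteMeasure μ]
    (hlsc : ∀ (v : ℕ → E) (v₀ : E), (∀ z, Tendsto (fun k => ⟪v k, z⟫) atTop (𝓝 ⟪v₀, z⟫)) →
      (f v₀ : EReal) ≤ liminf (fun k => (f (v k) : EReal)) atTop)
    (hα : 0 ≤ α) (hβ : 0 ≤ β) (hp0 : 0 < p) (hp1 : p ≤ 1) {x : ℕ → E × W} {x₀ : E × W}
    (hu : ∀ z, Tendsto (fun k => ⟪(x k).1, z⟫) atTop (𝓝 ⟪x₀.1, z⟫))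
    (hw : ∀ z, Tendsto (fun k => ⟪(x k).2, z⟫) atTop (𝓝 ⟪x₀.2, z⟫))
    (hι : Tendsto (fun k => ι (x k).2) atTop (𝓝 (ι x₀.2))) {m : ℝ}
    (hm : Tendsto (fun k => sparseObjective f α β γ p ι (x k)) atTop (𝓝 m)) :
    sparseObjective f α β γ p ι x₀ ≤ m := by
  have hJ : Tendsto (fun k => ∫ t, |ι (x k).2 t| ^ p ∂μ) atTop
      (𝓝 (∫ t, |ι x₀.2 t| ^ p ∂μ)) := by
    simpa only [Real.norm_eq_abs, Function.comp_def] using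
      ((Lp.continuous_integral_norm_rpow hp0 hp1).tendsto (ι x₀.2)).comp hι
  -- `2⟪y, y₀⟫ - ‖y₀‖² ≤ ‖y‖²` and the left side converges: the norm terms are weakly l.s.c.
  have hlim := (((hm.sub (((hu x₀.1).const_mul 2).sub_const (‖x₀.1‖ ^ 2) |>.const_mul (α / 2))).sub
    (((hw x₀.2).const_mul 2).sub_const (‖x₀.2‖ ^ 2) |>.const_mul (β / 2))).sub (hJ.const_mul γ))
  have := EReal.le_of_le_liminf_of_tendsto (hlsc _ _ hu) (fun k => ?_) hlim
  · rw [real_inner_self_eq_norm_sq, real_inner_self_eq_norm_sq] at this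
    unfold sparseObjective
    linarith
  · unfold sparseObjective
    nlinarith [real_inner_le_norm (x k).1 x₀.1, two_mul_le_add_sq ‖(x k).1‖ ‖x₀.1‖,
      real_inner_le_norm (x k).2 x₀.2, two_mul_le_add_sq ‖(x k).2‖ ‖x₀.2‖]

end Objective

variable {X : Type*} [MeasurableSpace X] {ρ : Measure X}

theorem zero_mem_sparseAdmissible [NormedSpace ℝ W] {ι : W →L[ℝ] Lp ℝ 2 μ} :
    (0, 0) ∈ sparseAdmissible ρ ι := by
  simp only [sparseAdmissible, Set.mem_ofPred_eq, map_zero]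
  filter_upwards [Lp.coeFn_zero ℝ 2 (ρ.prod μ),
    Measure.quasiMeasurePreserving_snd.ae (Lp.coeFn_zero ℝ 2 μ)] with q h₁ h₂
  rw [h₁, h₂]
  simp

theorem exists_mem_sparseAdmissible_le_of_tendsto [IsFiniteMeasure ρ] [IsFiniteMeasure μ]
    [InnerProductSpace ℝ W] [CompleteSpace W] {f : Lp ℝ 2 (ρ.prod μ) → ℝ}
    {ι : W →L[ℝ] Lp ℝ 2 μ} (hι : IsCompactOperator ι)
    (hlsc : ∀ (v : ℕ → Lp ℝ 2 (ρ.prod μ)) (v₀ : Lp ℝ 2 (ρ.prod μ)),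
      (∀ z, Tendsto (fun k => ⟪v k, z⟫) atTop (𝓝 ⟪v₀, z⟫)) →
      (f v₀ : EReal) ≤ liminf (fun k => (f (v k) : EReal)) atTop)
    {g : StrongDual ℝ (Lp ℝ 2 (ρ.prod μ))} {c : ℝ} (hfg : ∀ u, g u + c ≤ f u)
    {α β γ p : ℝ} (hα : 0 < α) (hβ : 0 < β) (hγ : 0 ≤ γ) (hp0 : 0 < p) (hp1 : p ≤ 1)
    {x : ℕ → Lp ℝ 2 (ρ.prod μ) × W} (hx : ∀ k, x k ∈ sparseAdmissible ρ ι) {m : ℝ}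
    (hm : Tendsto (fun k => sparseObjective f α β γ p ι (x k)) atTop (𝓝 m)) :
    ∃ y ∈ sparseAdmissible ρ ι, sparseObjective f α β γ p ι y ≤ m := by
  obtain ⟨M, hM⟩ := hm.bddAbove_range
  obtain ⟨R, hR⟩ := exists_norm_le_of_sparseObjective_le (p := p) (ι := ι) hfg hα hβ hγ M
  have hxR (k : ℕ) := hR (x k) (hM ⟨k, rfl⟩)
  obtain ⟨φ₁, u₀, hφ₁, hu⟩ := exists_strictMono_weak_tendsto fun k => (hxR k).1
  obtain ⟨φ₂, w₀, hφ₂, hw⟩ := exists_strictMono_weak_tendsto fun k => (hxR (φ₁ k)).2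
  obtain ⟨φ₃, hφ₃, hιw⟩ := hι.exists_strictMono_tendsto_of_weak (fun k => (hxR _).2) hw
  set ψ := φ₁ ∘ φ₂ ∘ φ₃
  have hu' (z : Lp ℝ 2 (ρ.prod μ)) : Tendsto (fun k => ⟪(x (ψ k)).1, z⟫) atTop (𝓝 ⟪u₀, z⟫) :=
    (hu z).comp (hφ₂.comp hφ₃).tendsto_atTop
  have hw' (z : W) : Tendsto (fun k => ⟪(x (ψ k)).2, z⟫) atTop (𝓝 ⟪w₀, z⟫) :=
    (hw z).comp hφ₃.tendsto_atTop
  refine ⟨(u₀, w₀), ae_abs_le_comp_snd_of_weak_tendsto ρ hu' hιw fun k => hx _,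
    sparseObjective_le_of_tendsto (x₀ := (u₀, w₀)) hlsc hα.le hβ.le hp0 hp1 hu' hw' hιw ?_⟩
  exact hm.comp (hφ₁.comp (hφ₂.comp hφ₃)).tendsto_atTop

end SparseProblem

theorem exists_minimizer_sparse_problem {Ω W : Type*} [MeasurableSpace Ω]
    (μ : Measure Ω) [IsFiniteMeasure μ] (T : ℝ)
    [NormedAddCommGroup W] [InnerProductSpace ℝ W] [CompleteSpace W]
    (ι : W →L[ℝ] Lp ℝ 2 μ) (hι : IsCompactOperator ι)
    (α β γ p : ℝ) (hα : 0 < α) (hβ : 0 < β) (hγ : 0 < γ) (hp : p ∈ Set.Ioo (0 : ℝ) 1)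
    (f : Lp ℝ 2 (timeSpaceMeasure μ T) → ℝ)
    (hlsc : ∀ (v : ℕ → Lp ℝ 2 (timeSpaceMeasure μ T)) (v₀ : Lp ℝ 2 (timeSpaceMeasure μ T)),
      (∀ z : Lp ℝ 2 (timeSpaceMeasure μ T),
        Tendsto (fun k => (inner ℝ (v k) z : ℝ)) atTop (nhds (inner ℝ v₀ z))) →
      ((f v₀ : EReal) ≤ liminf (fun k => ((f (v k) : ℝ) : EReal)) atTop))
    (hbound : ∃ (g : Lp ℝ 2 (timeSpaceMeasure μ T) →L[ℝ] ℝ) (c : ℝ),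
      ∀ u : Lp ℝ 2 (timeSpaceMeasure μ T), g u + c ≤ f u) :
    ∃ (ubar : Lp ℝ 2 (timeSpaceMeasure μ T)) (wbar : W),
      (∀ᵐ q ∂(timeSpaceMeasure μ T), |ubar q| ≤ (ι wbar) q.2) ∧
      ∀ (u : Lp ℝ 2 (timeSpaceMeasure μ T)) (w : W),
        (∀ᵐ q ∂(timeSpaceMeasure μ T), |u q| ≤ (ι w) q.2) →
        f ubar + α / 2 * ‖ubar‖ ^ 2 + β / 2 * ‖wbar‖ ^ 2 +
            γ * ∫ x, |(ι wbar) x| ^ p ∂μ ≤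
          f u + α / 2 * ‖u‖ ^ 2 + β / 2 * ‖w‖ ^ 2 + γ * ∫ x, |(ι w) x| ^ p ∂μ := by
  obtain ⟨hp0, hp1⟩ := hp
  obtain ⟨g, c, hfg⟩ := hbound
  obtain ⟨⟨ubar, wbar⟩, hmem, hmin⟩ := exists_isMinOn_of_tendsto
    (Φ := sparseObjective f α β γ p ι) (K := sparseAdmissible (volume.restrict (Set.Ioo 0 T)) ι)
    ⟨_, zero_mem_sparseAdmissible⟩
    ⟨c - ‖g‖ ^ 2 / α, Set.forall_mem_image.2 fun x _ =>
      (le_sparseObjective hfg hα hγ.le x).trans' (by nlinarith [sq_nonneg ‖x.1‖, sq_nonneg ‖x.2‖])⟩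
    fun _ _ hx hm => exists_mem_sparseAdmissible_le_of_tendsto hι hlsc hfg hα hβ hγ.le hp0 hp1.le
      hx hm
  exact ⟨ubar, wbar, hmem, fun u w huw => hmin (show (u, w) ∈ _ from huw)⟩
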